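/- Let m ≥ 2, n_k ≥ 2 for all k, let C ∈ ℝ^{n_1×⋯×n_m} be an entrywise nonnegative cost tensor, η > 0, and r_k ∈ Δ^{n_k} for k = 1,…,m. Let K = exp(−C/η) and let K̃ ∈ ℝ^{n_1×⋯×n_m} be entrywise strictly positive with ||log(K) − log(K̃)||_∞ ≤ ε_log for some 0 < ε_log ≤ 1. Let P̃ be a positive diagonal scaling of K̃ with ||P̃||_1 = 1 satisfying Σ_{k=1}^m ||r_k(P̃) − r_k||_1 ≤ ε_stop for some ε_stop with 0 < ε_stop ≤ 1, and let P*_η be a minimizer of V_C^η over B(r_1,…,r_m). Then |V_C^η(P*_η) − V_C^η(P̃)| ≤ η · ( ε_log · (2 + log(2/ε_log)) + (ε_log/2) · log((Π_{k=1}^m n_k) − 1) + 2 ε_stop · log( (1/ε_stop) · ((Π_{k=1}^m n_k) − 1) ) ) + (ε_log + 2 ε_stop) · ||C||_∞. -/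

import Mathlib

open Finset

namespace MOT

/-- The index set of a tensor with mode sizes `n 0, …, n (m-1)`. -/
abbrev Idx {m : ℕ} (n : Fin m → ℕ) := ∀ k : Fin m, Fin (n k)

/-- A real tensor of order `m` with mode sizes `n k`. -/
abbrev Tensor {m : ℕ} (n : Fin m → ℕ) := Idx n → ℝ

/-- The `k`-th marginal of a tensor: `(r_k(X))_j = ∑_{I : i_k = j} X_I`. -/
noncomputable def marginal {m : ℕ} {n : Fin m → ℕ} (X : Tensor n) (k : Fin m)
    (j : Fin (n k)) : ℝ :=
  ∑ I : Idx n, if I k = j then X I else 0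

/-- The entrywise ℓ¹-norm of a tensor. -/
noncomputable def tnorm1 {m : ℕ} {n : Fin m → ℕ} (X : Tensor n) : ℝ :=
  ∑ I : Idx n, |X I|

/-- The uniform norm (maximum absolute entry) of a real-valued family. -/
noncomputable def supAbs {ι : Type*} (X : ι → ℝ) : ℝ := ⨆ i, |X i|

/-- The ℓ¹-norm of a vector. -/
noncomputable def vnorm1 {N : ℕ} (v : Fin N → ℝ) : ℝ := ∑ j, |v j|

/-- The Euclidean norm of a vector. -/
noncomputable def vnorm2 {N : ℕ} (v : Fin N → ℝ) : ℝ := Real.sqrt (∑ j, v j ^ 2)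

/-- The Euclidean inner product of two vectors. -/
noncomputable def vinner {N : ℕ} (v w : Fin N → ℝ) : ℝ := ∑ j, v j * w j

/-- `v ∈ Δ^N`: entrywise strictly positive with entries summing to 1. -/
def IsSimplex {N : ℕ} (v : Fin N → ℝ) : Prop := (∀ j, 0 < v j) ∧ ∑ j, v j = 1

/-- `P ∈ B(r_1,…,r_m)`: entrywise nonnegative with prescribed marginals. -/
def Feasible {m : ℕ} {n : Fin m → ℕ} (r : ∀ k : Fin m, Fin (n k) → ℝ)
    (P : Tensor n) : Prop :=
  (∀ I, 0 ≤ P I) ∧ ∀ k j, marginal P k j = r k j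

/-- The entropy `H(P) = -∑_I P_I log P_I` (with `0 · log 0 = 0`). -/
noncomputable def entropy {m : ℕ} {n : Fin m → ℕ} (P : Tensor n) : ℝ :=
  -∑ I : Idx n, P I * Real.log (P I)

/-- The inner product `⟨X, Y⟩ = ∑_I X_I Y_I` of two tensors. -/
noncomputable def tinner {m : ℕ} {n : Fin m → ℕ} (X Y : Tensor n) : ℝ :=
  ∑ I : Idx n, X I * Y I

/-- The entropic transport cost `V_C^η(P) = ⟨C, P⟩ − η H(P)`. -/
noncomputable def entCost {m : ℕ} {n : Fin m → ℕ} (C : Tensor n) (η : ℝ)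
    (P : Tensor n) : ℝ :=
  tinner C P - η * entropy P

/-- `P` is a positive diagonal scaling of `K`. -/
def IsScaling {m : ℕ} {n : Fin m → ℕ} (K P : Tensor n) : Prop :=
  ∃ β : ∀ k : Fin m, Fin (n k) → ℝ, ∀ I, P I = K I * ∏ k, Real.exp (β k (I k))

end MOT

/-!
Relative to the kernel `K̃`, the cost reads `V(X) = η KL(X ‖ K̃) + ⟨X, C + η log K̃⟩`, and
`|C + η log K̃| ≤ η ε_log` entrywise. Being a diagonal scaling of `K̃`, `P̃` minimises
`KL(· ‖ K̃)` among nonnegative tensors with its own marginals (Gibbs). Round `P̃` onto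
`B(r_1,…,r_m)` and `P*` onto the marginals of `P̃`: scale every fibre down until no marginal is
too large, then add a rank-one tensor carrying the missing mass; each moves by at most `ε_stop`
in `ℓ¹`. Then `V(P*) ≤ V(round P̃)` and `V(P̃) ≤ V(round P*) + 2η ε_log`, while continuity of
the entropy (`|H(p) - H(q)| ≤ u log(N/u)` for `‖p - q‖₁ ≤ u`, where `N = ∏ n_k`) bounds each
rounding's effect on `V` by `ε_stop ‖C‖_∞ + η ε_stop log(N/ε_stop)`.
-/

namespace Real

theorem sub_le_mul_log_sub_log {t a : ℝ} (ht : 0 ≤ t) (ha : 0 < a) :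
    t - a ≤ t * (log t - log a) := by
  rcases ht.eq_or_lt with rfl | ht
  · simpa using ha.le
  have h := mul_le_mul_of_nonneg_left (self_sub_one_le_mul_log (div_pos ht ha).le) ha.le
  rw [log_div ht.ne' ha.ne'] at h
  field_simp at h
  linarith

theorem negMulLog_add_le {a b : ℝ} (ha : 0 ≤ a) (hb : 0 ≤ b) :
    negMulLog (a + b) ≤ negMulLog a + negMulLog b := by
  rcases ha.eq_or_lt with rfl | ha
  · simp
  have h1 := mul_le_mul_of_nonneg_left (log_le_log ha (le_add_of_nonneg_right hb)) ha.le
  rcases hb.eq_or_lt with rfl | hb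
  · simp
  have h2 := mul_le_mul_of_nonneg_left (log_le_log hb (le_add_of_nonneg_left ha.le)) hb.le
  simp only [negMulLog]
  linarith

theorem negMulLog_sub_negMulLog_le {x y : ℝ} (hy : 0 ≤ y) (hyx : y ≤ x) (hx : x ≤ 1) :
    negMulLog y - negMulLog x ≤ x - y := by
  rcases (hy.trans hyx).eq_or_lt with rfl | hx0
  · simp [le_antisymm hyx hy]
  -- tangent line of the concave function `negMulLog` at `x`, whose slope `-log x - 1` is `≥ -1`
  have h := sub_le_mul_log_sub_log hy hx0
  have hlog : x * log x ≤ y * log x :=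
    mul_le_mul_of_nonpos_right hyx (log_nonpos hx0.le hx)
  simp only [negMulLog]
  linarith

theorem negMulLog_le_exp_neg_one {x : ℝ} (hx : 0 ≤ x) : negMulLog x ≤ exp (-1) := by
  have h := sub_le_mul_log_sub_log hx (exp_pos (-1))
  rw [log_exp] at h
  simp only [negMulLog]
  linarith

theorem self_le_negMulLog {x : ℝ} (hx : 0 ≤ x) (hxe : x ≤ exp (-1)) : x ≤ negMulLog x := by
  rcases hx.eq_or_lt with rfl | hx
  · simp
  have h : log x ≤ -1 := (log_le_iff_le_exp hx).2 hxe
  simp only [negMulLog]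
  nlinarith

theorem abs_negMulLog_sub_le {x y : ℝ} (hx0 : 0 ≤ x) (hx1 : x ≤ 1) (hy0 : 0 ≤ y) (hy1 : y ≤ 1) :
    |negMulLog x - negMulLog y| ≤ negMulLog (min |x - y| (exp (-1))) := by
  wlog hyx : y ≤ x generalizing x y
  · rw [abs_sub_comm, abs_sub_comm x]
    exact this hy0 hy1 hx0 hx1 (le_of_not_ge hyx)
  rw [abs_of_nonneg (sub_nonneg.2 hyx), abs_sub_le_iff]
  rcases le_total (x - y) (exp (-1)) with hd | hd
  · rw [min_eq_left hd]
    have hadd := negMulLog_add_le hy0 (sub_nonneg.2 hyx)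
    rw [add_sub_cancel] at hadd
    have := self_le_negMulLog (sub_nonneg.2 hyx) hd
    constructor <;> linarith [negMulLog_sub_negMulLog_le hy0 hyx hx1]
  · have he : negMulLog (exp (-1)) = exp (-1) := by simp [negMulLog, log_exp]
    rw [min_eq_right hd, he]
    constructor <;> linarith [negMulLog_le_exp_neg_one hx0, negMulLog_le_exp_neg_one hy0,
      negMulLog_nonneg hx0 hx1, negMulLog_nonneg hy0 hy1]

theorem sum_negMulLog_le {ι : Type*} [Fintype ι] {s : ι → ℝ} (hs : ∀ i, 0 ≤ s i) {u : ℝ}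
    (hu : 0 < u) (hsu : ∑ i, s i ≤ u) (huN : exp 1 * u ≤ Fintype.card ι) :
    ∑ i, negMulLog (s i) ≤ u * log (Fintype.card ι / u) := by
  set N : ℝ := (Fintype.card ι : ℝ)
  have hN : 0 < N := by nlinarith [exp_pos 1]
  have hlogN : 1 ≤ log (N / u) := by
    rw [le_log_iff_exp_le (by positivity), le_div_iff₀ hu]; exact huN
  -- tangent lines of `negMulLog` at the mean value `u / N`
  have tangent : ∀ i, negMulLog (s i) ≤ s i * (log (N / u) - 1) + u / N := fun i => by
    have h := sub_le_mul_log_sub_log (hs i) (div_pos hu hN)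
    rw [log_div hu.ne' hN.ne'] at h
    rw [log_div hN.ne' hu.ne', negMulLog]
    linarith
  calc ∑ i, negMulLog (s i) ≤ ∑ i, (s i * (log (N / u) - 1) + u / N) :=
        Finset.sum_le_sum fun i _ => tangent i
    _ = (∑ i, s i) * (log (N / u) - 1) + u := by
      rw [Finset.sum_add_distrib, ← Finset.sum_mul, Finset.sum_const, Finset.card_univ,
        nsmul_eq_mul, mul_div_cancel₀ u hN.ne']
    _ ≤ u * (log (N / u) - 1) + u := by gcongr
    _ = u * log (N / u) := by ring

theorem abs_sum_negMulLog_sub_le {ι : Type*} [Fintype ι] {p q : ι → ℝ}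
    (hp : ∀ i, p i ∈ Set.Icc 0 1) (hq : ∀ i, q i ∈ Set.Icc 0 1) {u : ℝ} (hu : 0 < u)
    (hpq : ∑ i, |p i - q i| ≤ u) (huN : exp 1 * u ≤ Fintype.card ι) :
    |∑ i, negMulLog (p i) - ∑ i, negMulLog (q i)| ≤ u * log (Fintype.card ι / u) :=
  calc |∑ i, negMulLog (p i) - ∑ i, negMulLog (q i)|
      ≤ ∑ i, |negMulLog (p i) - negMulLog (q i)| := by
        rw [← Finset.sum_sub_distrib]; exact Finset.abs_sum_le_sum_abs _ _
    _ ≤ ∑ i, negMulLog (min |p i - q i| (exp (-1))) := by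
        gcongr with i; exact abs_negMulLog_sub_le (hp i).1 (hp i).2 (hq i).1 (hq i).2
    _ ≤ u * log (Fintype.card ι / u) :=
        sum_negMulLog_le (fun i => le_min (abs_nonneg _) (exp_pos _).le) hu
          ((Finset.sum_le_sum fun i _ => min_le_left _ _).trans hpq) huN

theorem mul_log_div_le {u N : ℝ} (hu : 0 < u) (hu1 : u ≤ 1) (hN : 4 ≤ N) :
    u * log (N / u) ≤ 2 * u * log (u⁻¹ * (N - 1)) := by
  have hsq : N / u ≤ (u⁻¹ * (N - 1)) ^ 2 := by
    rw [div_le_iff₀ hu, show (u⁻¹ * (N - 1)) ^ 2 * u = (N - 1) ^ 2 / u by field_simp,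
      le_div_iff₀ hu]
    nlinarith
  have := log_le_log (by positivity) hsq
  rw [log_pow] at this
  nlinarith

end Real

namespace Finset

theorem one_sub_prod_le_sum_one_sub {ι : Type*} (s : Finset ι) {a : ι → ℝ}
    (h0 : ∀ i ∈ s, 0 ≤ a i) (h1 : ∀ i ∈ s, a i ≤ 1) :
    1 - ∏ i ∈ s, a i ≤ ∑ i ∈ s, (1 - a i) := by
  classical
  induction s using Finset.induction_on with
  | empty => simp
  | insert i s hi ih =>
    simp only [mem_insert, forall_eq_or_imp] at h0 h1
    rw [prod_insert hi, sum_insert hi]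
    nlinarith [ih h0.2 h1.2, mul_nonneg (sub_nonneg.2 h1.1) (sub_nonneg.2 (prod_le_one h0.2 h1.2))]

theorem abs_sum_mul_le {ι : Type*} (s : Finset ι) (X : ι → ℝ) {Y : ι → ℝ} {c : ℝ}
    (hY : ∀ i ∈ s, |Y i| ≤ c) : |∑ i ∈ s, X i * Y i| ≤ c * ∑ i ∈ s, |X i| :=
  calc |∑ i ∈ s, X i * Y i| ≤ ∑ i ∈ s, |X i| * c :=
        (abs_sum_le_sum_abs _ _).trans <| sum_le_sum fun i hi => by
          rw [abs_mul]; exact mul_le_mul_of_nonneg_left (hY i hi) (abs_nonneg _)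
    _ = c * ∑ i ∈ s, |X i| := by rw [mul_sum]; exact sum_congr rfl fun _ _ => mul_comm _ _

end Finset

theorem mul_min_one_div {x y : ℝ} (hx : 0 ≤ x) (hy : 0 ≤ y) : x * min 1 (y / x) = min x y := by
  rcases hx.eq_or_lt with rfl | hx
  · simpa using hy
  rw [mul_min_of_nonneg _ _ hx.le, mul_one, mul_div_cancel₀ y hx.ne']

namespace MOT

open Real

variable {m : ℕ} {n : Fin m → ℕ}

theorem sum_marginal (X : Tensor n) (k : Fin m) : ∑ j, marginal X k j = ∑ I, X I := by
  simp only [marginal]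
  rw [Finset.sum_comm]
  simp

theorem marginal_nonneg {X : Tensor n} (hX : ∀ I, 0 ≤ X I) (k : Fin m) (j : Fin (n k)) :
    0 ≤ marginal X k j :=
  Finset.sum_nonneg fun I _ => by split_ifs <;> simp [hX I]

theorem marginal_mono {X Y : Tensor n} (h : ∀ I, X I ≤ Y I) (k : Fin m) (j : Fin (n k)) :
    marginal X k j ≤ marginal Y k j :=
  Finset.sum_le_sum fun I _ => by split_ifs <;> simp [h I]

theorem marginal_add (X Y : Tensor n) (k : Fin m) (j : Fin (n k)) :
    marginal (fun I => X I + Y I) k j = marginal X k j + marginal Y k j := by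
  simp only [marginal, ← Finset.sum_add_distrib]
  exact Finset.sum_congr rfl fun I _ => by split_ifs <;> simp

theorem marginal_mul_comp (X : Tensor n) (k : Fin m) (f : Fin (n k) → ℝ) (j : Fin (n k)) :
    marginal (fun I => X I * f (I k)) k j = marginal X k j * f j := by
  simp only [marginal, Finset.sum_mul]
  exact Finset.sum_congr rfl fun I _ => by split_ifs with h <;> simp [h]

theorem sum_mul_comp (X : Tensor n) (k : Fin m) (f : Fin (n k) → ℝ) :
    ∑ I, X I * f (I k) = ∑ j, marginal X k j * f j := by
  simp only [← marginal_mul_comp, sum_marginal]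

theorem marginal_prod (e : ∀ k, Fin (n k) → ℝ) (k : Fin m) (j : Fin (n k)) :
    marginal (fun I => ∏ l, e l (I l)) k j =
      e k j * ∏ l ∈ Finset.univ.erase k, ∑ i, e l i := by
  -- restricting to `I k = j` replaces the factor `e k` by `Pi.single j (e k j)`
  set e' := Function.update e k (Pi.single j (e k j))
  have he' : ∀ l ∈ Finset.univ.erase k, e' l = e l := fun l hl =>
    Function.update_of_ne (Finset.ne_of_mem_erase hl) _ _
  have hterm : ∀ I : Idx n, (if I k = j then ∏ l, e l (I l) else 0) = ∏ l, e' l (I l) := by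
    intro I
    rw [← Finset.mul_prod_erase _ _ (Finset.mem_univ k),
      ← Finset.mul_prod_erase _ _ (Finset.mem_univ k),
      Finset.prod_congr rfl fun l hl => congrFun (he' l hl) (I l)]
    simp only [e', Function.update_self, Pi.single_apply]
    split_ifs with h <;> simp [h]
  rw [marginal, Finset.sum_congr rfl fun I _ => hterm I, ← Fintype.prod_sum,
    ← Finset.mul_prod_erase _ _ (Finset.mem_univ k),
    Finset.prod_congr rfl fun l hl => by rw [he' l hl]]
  simp [e']

theorem sum_sub_min_eq_half {N : ℕ} {v w : Fin N → ℝ} (h : ∑ j, v j = ∑ j, w j) :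
    ∑ j, (v j - min (v j) (w j)) = vnorm1 (fun j => v j - w j) / 2 := by
  have hmin : ∀ j, v j - min (v j) (w j) = ((v j - w j) + |v j - w j|) / 2 := fun j => by
    rcases le_total (v j) (w j) with hj | hj
    · rw [min_eq_left hj, abs_of_nonpos (sub_nonpos.2 hj)]; ring
    · rw [min_eq_right hj, abs_of_nonneg (sub_nonneg.2 hj)]; ring
  rw [Finset.sum_congr rfl fun j _ => hmin j, ← Finset.sum_div, Finset.sum_add_distrib,
    Finset.sum_sub_distrib, h, sub_self, zero_add, vnorm1]

-- Each factor alone would bring the marginal `r_k(P)_j` down to `min (r_k(P)_j) (q k j)`.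
noncomputable def shrink (q : ∀ k, Fin (n k) → ℝ) (P : Tensor n) : Tensor n :=
  fun I => P I * ∏ k, min 1 (q k (I k) / marginal P k (I k))

section Shrink

variable {q : ∀ k, Fin (n k) → ℝ} (hq : ∀ k j, 0 ≤ q k j) {P : Tensor n} (hP : ∀ I, 0 ≤ P I)
include hq hP

theorem shrink_factor_mem (k : Fin m) (j : Fin (n k)) :
    min 1 (q k j / marginal P k j) ∈ Set.Icc 0 1 :=
  ⟨le_min zero_le_one (div_nonneg (hq k j) (marginal_nonneg hP k j)), min_le_left _ _⟩

theorem shrink_nonneg (I : Idx n) : 0 ≤ shrink q P I :=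
  mul_nonneg (hP I) (Finset.prod_nonneg fun k _ => (shrink_factor_mem hq hP k (I k)).1)

theorem shrink_le (I : Idx n) : shrink q P I ≤ P I :=
  mul_le_of_le_one_right (hP I) (Finset.prod_le_one (fun k _ => (shrink_factor_mem hq hP k (I k)).1)
    fun k _ => (shrink_factor_mem hq hP k (I k)).2)

theorem marginal_shrink_le (k : Fin m) (j : Fin (n k)) : marginal (shrink q P) k j ≤ q k j := by
  have hle : ∀ I, shrink q P I ≤ P I * min 1 (q k (I k) / marginal P k (I k)) := fun I => by
    rw [shrink, ← Finset.mul_prod_erase _ _ (Finset.mem_univ k)]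
    exact mul_le_mul_of_nonneg_left (mul_le_of_le_one_right (shrink_factor_mem hq hP k (I k)).1
      (Finset.prod_le_one (fun l _ => (shrink_factor_mem hq hP l (I l)).1)
        fun l _ => (shrink_factor_mem hq hP l (I l)).2)) (hP I)
  calc marginal (shrink q P) k j ≤ marginal P k j * min 1 (q k j / marginal P k j) :=
        (marginal_mono hle k j).trans_eq
          (marginal_mul_comp P k (fun j => min 1 (q k j / marginal P k j)) j)
    _ = min (marginal P k j) (q k j) := mul_min_one_div (marginal_nonneg hP k j) (hq k j)
    _ ≤ q k j := min_le_right _ _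

theorem sum_sub_sum_shrink_le :
    ∑ I, P I - ∑ I, shrink q P I ≤ ∑ k, ∑ j, (marginal P k j - min (marginal P k j) (q k j)) :=
  calc ∑ I, P I - ∑ I, shrink q P I
      = ∑ I, P I * (1 - ∏ k, min 1 (q k (I k) / marginal P k (I k))) := by
        rw [← Finset.sum_sub_distrib]; exact Finset.sum_congr rfl fun I _ => by rw [shrink]; ring
    _ ≤ ∑ I, P I * ∑ k, (1 - min 1 (q k (I k) / marginal P k (I k))) := by
        gcongr with I
        · exact hP I
        · exact Finset.one_sub_prod_le_sum_one_sub _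
            (fun k _ => (shrink_factor_mem hq hP k (I k)).1)
            fun k _ => (shrink_factor_mem hq hP k (I k)).2
    _ = ∑ k, ∑ j, marginal P k j * (1 - min 1 (q k j / marginal P k j)) := by
        simp only [Finset.mul_sum]
        rw [Finset.sum_comm]
        exact Finset.sum_congr rfl fun k _ =>
          sum_mul_comp P k (fun j => 1 - min 1 (q k j / marginal P k j))
    _ = ∑ k, ∑ j, (marginal P k j - min (marginal P k j) (q k j)) := by
        refine Finset.sum_congr rfl fun k _ => Finset.sum_congr rfl fun j _ => ?_
        rw [mul_sub, mul_one, mul_min_one_div (marginal_nonneg hP k j) (hq k j)]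

end Shrink

theorem exists_le_marginal_eq {X : Tensor n} {q : ∀ k, Fin (n k) → ℝ}
    (hXq : ∀ k j, marginal X k j ≤ q k j) {t : ℝ} (hq : ∀ k, ∑ j, q k j = t)
    (hXt : ∑ I, X I ≤ t) :
    ∃ Q : Tensor n, (∀ I, X I ≤ Q I) ∧ (∀ k j, marginal Q k j = q k j) ∧ ∑ I, Q I = t := by
  -- Each `e k` sums to `err`, so `(∏ l, e l (I l)) * (err / err ^ m)` has marginals `e k`
  -- (if `err = 0`, every `e k` vanishes).
  obtain ⟨err, herr_def⟩ : ∃ err, err = t - ∑ I, X I := ⟨_, rfl⟩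
  set e : ∀ k, Fin (n k) → ℝ := fun k j => q k j - marginal X k j
  have he0 : ∀ k j, 0 ≤ e k j := fun k j => sub_nonneg.2 (hXq k j)
  have he : ∀ k, ∑ j, e k j = err := fun k => by
    simp only [e, Finset.sum_sub_distrib, hq, sum_marginal, herr_def]
  have herr : 0 ≤ err := herr_def ▸ sub_nonneg.2 hXt
  set c := err / err ^ m
  have hprod : ∀ s : Finset (Fin m), ∏ l ∈ s, ∑ i, e l i = err ^ s.card := fun s => by
    rw [Finset.prod_congr rfl fun l _ => he l, Finset.prod_const]
  refine ⟨fun I => X I + (∏ l, e l (I l)) * c, fun I => le_add_of_nonneg_right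
    (mul_nonneg (Finset.prod_nonneg fun l _ => he0 l (I l)) (by positivity)), fun k j => ?_, ?_⟩
  · have hmul := marginal_mul_comp (fun I => ∏ l, e l (I l)) k (fun _ => c) j
    rw [marginal_add, hmul, marginal_prod, hprod]
    rcases herr.eq_or_lt with h0 | hpos
    · have : e k j = 0 := (Finset.sum_eq_zero_iff_of_nonneg fun i _ => he0 k i).1
        ((he k).trans h0.symm) j (Finset.mem_univ j)
      simp only [this, zero_mul, add_zero]
      simp only [e] at this
      linarith
    · rw [Finset.card_erase_of_mem (Finset.mem_univ k), Finset.card_univ, Fintype.card_fin]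
      have hc : err ^ (m - 1) * c = 1 := by
        rw [← mul_div_assoc, ← pow_succ, Nat.sub_add_cancel (Fin.pos k),
          div_self (pow_ne_zero _ hpos.ne')]
      rw [mul_assoc, hc, mul_one, add_sub_cancel]
  · rw [Finset.sum_add_distrib, ← Finset.sum_mul, ← Fintype.prod_sum, hprod, Finset.card_univ,
      Fintype.card_fin]
    have hc : err ^ m * c = err := by
      rcases herr.eq_or_lt with h0 | hpos
      · simp [c, ← h0]
      · exact mul_div_cancel₀ _ (pow_ne_zero _ hpos.ne')
    rw [hc, herr_def, add_sub_cancel]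

theorem exists_feasible_sum_abs_sub_le {P : Tensor n} (hP : ∀ I, 0 ≤ P I)
    {q : ∀ k, Fin (n k) → ℝ} (hq : ∀ k j, 0 ≤ q k j) (hqP : ∀ k, ∑ j, q k j = ∑ I, P I) :
    ∃ Q, Feasible q Q ∧ ∑ I, |Q I - P I| ≤ ∑ k, vnorm1 (fun j => marginal P k j - q k j) := by
  obtain ⟨Q, hXQ, hQq, hQsum⟩ := exists_le_marginal_eq (marginal_shrink_le hq hP) hqP
    (Finset.sum_le_sum fun I _ => shrink_le hq hP I)
  refine ⟨Q, ⟨fun I => (shrink_nonneg hq hP I).trans (hXQ I), hQq⟩, ?_⟩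
  calc ∑ I, |Q I - P I| ≤ ∑ I, ((Q I - shrink q P I) + (P I - shrink q P I)) := by
        gcongr with I
        rw [abs_le]
        constructor <;> linarith [hXQ I, shrink_le hq hP I]
    _ = 2 * (∑ I, P I - ∑ I, shrink q P I) := by
        rw [Finset.sum_add_distrib, Finset.sum_sub_distrib, Finset.sum_sub_distrib, hQsum]; ring
    _ ≤ 2 * ∑ k, ∑ j, (marginal P k j - min (marginal P k j) (q k j)) := by
        gcongr; exact sum_sub_sum_shrink_le hq hP
    _ = ∑ k, vnorm1 (fun j => marginal P k j - q k j) := by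
        rw [Finset.mul_sum]
        refine Finset.sum_congr rfl fun k _ => ?_
        rw [sum_sub_min_eq_half ((sum_marginal P k).trans (hqP k).symm)]
        ring

theorem Feasible.sum_eq {q : ∀ k, Fin (n k) → ℝ} {P : Tensor n} (hP : Feasible q P) (k : Fin m) :
    ∑ I, P I = ∑ j, q k j := by
  rw [← sum_marginal P k]
  exact Finset.sum_congr rfl fun j _ => hP.2 k j

theorem IsScaling.pos {K P : Tensor n} (hK : ∀ I, 0 < K I) (hP : IsScaling K P) (I : Idx n) :
    0 < P I := by
  obtain ⟨β, hβ⟩ := hP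
  rw [hβ I]
  exact mul_pos (hK I) (Finset.prod_pos fun k _ => exp_pos _)

noncomputable def relEntropy (X K : Tensor n) : ℝ :=
  ∑ I, X I * (log (X I) - log (K I))

theorem relEntropy_le_of_isScaling {K P : Tensor n} (hK : ∀ I, 0 < K I) (hP : IsScaling K P)
    {Q : Tensor n} (hQ : ∀ I, 0 ≤ Q I) (hsum : ∑ I, Q I = ∑ I, P I)
    (hmarg : ∀ k j, marginal Q k j = marginal P k j) :
    relEntropy P K ≤ relEntropy Q K := by
  have hP0 := hP.pos hK
  obtain ⟨β, hβ⟩ := hP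
  have hlog : ∀ I, log (P I) - log (K I) = ∑ k, β k (I k) := fun I => by
    rw [hβ I, log_mul (hK I).ne' (Finset.prod_pos fun k _ => exp_pos _).ne', ← exp_sum, log_exp,
      add_sub_cancel_left]
  -- `log P - log K` is a sum of functions of single indices, so it integrates alike against
  -- `P` and `Q`
  have hlin : ∀ X : Tensor n, ∑ I, X I * (log (P I) - log (K I)) =
      ∑ k, ∑ j, marginal X k j * β k j := fun X => by
    simp only [hlog, Finset.mul_sum]
    rw [Finset.sum_comm]
    exact Finset.sum_congr rfl fun k _ => sum_mul_comp X k (β k)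
  have hgibbs : ∑ I, (Q I - P I) ≤ ∑ I, Q I * (log (Q I) - log (P I)) :=
    Finset.sum_le_sum fun I _ => sub_le_mul_log_sub_log (hQ I) (hP0 I)
  have hQ_eq : relEntropy Q K =
      ∑ I, Q I * (log (Q I) - log (P I)) + ∑ I, Q I * (log (P I) - log (K I)) := by
    rw [relEntropy, ← Finset.sum_add_distrib]
    exact Finset.sum_congr rfl fun I _ => by ring
  rw [hQ_eq, relEntropy, hlin, hlin]
  simp only [hmarg]
  rw [Finset.sum_sub_distrib, hsum, sub_self] at hgibbs
  linarith

theorem entropy_eq_sum_negMulLog (X : Tensor n) : entropy X = ∑ I, negMulLog (X I) := by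
  simp only [entropy, negMulLog, neg_mul, Finset.sum_neg_distrib]

theorem abs_le_supAbs {ι : Type*} [Finite ι] (X : ι → ℝ) (i : ι) : |X i| ≤ supAbs X :=
  le_ciSup (f := fun i => |X i|) (Set.finite_range _).bddAbove i

theorem supAbs_nonneg {ι : Type*} (X : ι → ℝ) : 0 ≤ supAbs X :=
  Real.iSup_nonneg fun _ => abs_nonneg _

theorem mem_Icc_of_sum_eq_one {X : Tensor n} (hX : ∀ I, 0 ≤ X I) (h1 : ∑ I, X I = 1)
    (I : Idx n) : X I ∈ Set.Icc 0 1 :=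
  ⟨hX I, h1 ▸ Finset.single_le_sum (fun J _ => hX J) (Finset.mem_univ I)⟩

theorem entCost_sub_le (C : Tensor n) {η : ℝ} (hη : 0 ≤ η) {X Y : Tensor n}
    (hX : ∀ I, 0 ≤ X I) (hX1 : ∑ I, X I = 1) (hY : ∀ I, 0 ≤ Y I) (hY1 : ∑ I, Y I = 1)
    {u : ℝ} (hu : 0 < u) (hXY : ∑ I, |X I - Y I| ≤ u)
    (huN : exp 1 * u ≤ Fintype.card (Idx n)) :
    entCost C η X - entCost C η Y ≤
      supAbs C * u + η * (u * log (Fintype.card (Idx n) / u)) := by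
  have hcost : tinner C X - tinner C Y ≤ supAbs C * u := by
    have h := Finset.abs_sum_mul_le .univ (fun I => X I - Y I) fun I _ => abs_le_supAbs C I
    rw [tinner, tinner, ← Finset.sum_sub_distrib]
    calc ∑ I, (C I * X I - C I * Y I) = ∑ I, (X I - Y I) * C I :=
          Finset.sum_congr rfl fun I _ => by ring
      _ ≤ supAbs C * ∑ I, |X I - Y I| := (le_abs_self _).trans h
      _ ≤ supAbs C * u := mul_le_mul_of_nonneg_left hXY (supAbs_nonneg C)
  have hent := abs_sum_negMulLog_sub_le (mem_Icc_of_sum_eq_one hX hX1)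
    (mem_Icc_of_sum_eq_one hY hY1) hu hXY huN
  rw [← entropy_eq_sum_negMulLog, ← entropy_eq_sum_negMulLog, abs_le] at hent
  have := mul_le_mul_of_nonneg_left (neg_le.1 hent.1) hη
  rw [entCost, entCost]
  linarith

theorem entCost_eq (C K X : Tensor n) (η : ℝ) :
    entCost C η X = η * relEntropy X K + ∑ I, X I * (C I + η * log (K I)) := by
  rw [entCost, tinner, entropy, relEntropy, mul_neg, sub_neg_eq_add, Finset.mul_sum,
    Finset.mul_sum, ← Finset.sum_add_distrib, ← Finset.sum_add_distrib]
  exact Finset.sum_congr rfl fun I _ => by ring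

theorem entCost_le_of_isScaling {C K P : Tensor n} {η δ : ℝ} (hK : ∀ I, 0 < K I)
    (hP : IsScaling K P) (hη : 0 ≤ η) (hCK : ∀ I, |C I + η * log (K I)| ≤ δ) {Q : Tensor n}
    (hQ : ∀ I, 0 ≤ Q I) (hsum : ∑ I, Q I = ∑ I, P I)
    (hmarg : ∀ k j, marginal Q k j = marginal P k j) :
    entCost C η P ≤ entCost C η Q + δ * ∑ I, |P I - Q I| := by
  have hrel := mul_le_mul_of_nonneg_left (relEntropy_le_of_isScaling hK hP hQ hsum hmarg) hη
  have hlin := (le_abs_self _).trans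
    (Finset.abs_sum_mul_le .univ (fun I => P I - Q I) fun I _ => hCK I)
  simp only [sub_mul, Finset.sum_sub_distrib] at hlin
  rw [entCost_eq C K P, entCost_eq C K Q]
  linarith

theorem abs_add_mul_log_le {c κ η ε : ℝ} (hη : 0 < η)
    (h : |log (exp (-c / η)) - log κ| ≤ ε) : |c + η * log κ| ≤ η * ε := by
  rw [log_exp] at h
  calc |c + η * log κ| = η * |-c / η - log κ| := by
        rw [← abs_of_pos hη, ← abs_mul, ← abs_neg, abs_of_pos hη]
        congr 1
        field_simp
        ring
    _ ≤ η * ε := mul_le_mul_of_nonneg_left h hη.le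

theorem abs_entCost_sub_le_of_isScaling [NeZero m] {C K P Pstar : Tensor n} {η δ u : ℝ}
    {r : ∀ k, Fin (n k) → ℝ} (hr : ∀ k, IsSimplex (r k)) (hK : ∀ I, 0 < K I)
    (hP : IsScaling K P) (hP1 : ∑ I, P I = 1) (hη : 0 ≤ η)
    (hCK : ∀ I, |C I + η * log (K I)| ≤ δ) (hu : 0 < u)
    (huN : exp 1 * u ≤ Fintype.card (Idx n))
    (hstop : ∑ k, vnorm1 (fun j => marginal P k j - r k j) ≤ u)
    (hPstarF : Feasible r Pstar)
    (hPstarMin : ∀ Q : Tensor n, Feasible r Q → entCost C η Pstar ≤ entCost C η Q) :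
    |entCost C η Pstar - entCost C η P| ≤
      2 * δ + supAbs C * u + η * (u * log (Fintype.card (Idx n) / u)) := by
  have hP0 : ∀ I, 0 ≤ P I := fun I => (hP.pos hK I).le
  have hPs1 : ∑ I, Pstar I = 1 := (hPstarF.sum_eq 0).trans (hr 0).2
  -- `Q` rounds `P` onto the transport polytope, `R` rounds `Pstar` onto the marginals of `P`
  obtain ⟨Q, hQ, hQP⟩ := exists_feasible_sum_abs_sub_le hP0 (fun k j => ((hr k).1 j).le)
    fun k => (hr k).2.trans hP1.symm
  obtain ⟨R, hR, hRPs⟩ := exists_feasible_sum_abs_sub_le hPstarF.1 (marginal_nonneg hP0)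
    fun k => (sum_marginal P k).trans (hP1.trans hPs1.symm)
  have hRPs_le : ∑ I, |R I - Pstar I| ≤ u := by
    refine hRPs.trans (le_of_eq_of_le (Finset.sum_congr rfl fun k _ => ?_) hstop)
    simp only [vnorm1, hPstarF.2 k, abs_sub_comm (r k _)]
  have hQ1 : ∑ I, Q I = 1 := (hQ.sum_eq 0).trans (hr 0).2
  have hR1 : ∑ I, R I = 1 := (hR.sum_eq 0).trans (by rw [sum_marginal, hP1])
  have hPR : ∑ I, |P I - R I| ≤ 2 := calc
    ∑ I, |P I - R I| ≤ ∑ I, (P I + R I) := Finset.sum_le_sum fun I _ =>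
      abs_sub_le_iff.2 ⟨by linarith [hR.1 I], by linarith [hP0 I]⟩
    _ = 2 := by rw [Finset.sum_add_distrib, hP1, hR1]; norm_num
  have hδ : 0 ≤ δ := by
    obtain ⟨I, -, -⟩ := Finset.exists_ne_zero_of_sum_ne_zero (hP1 ▸ one_ne_zero : ∑ I, P I ≠ 0)
    exact (abs_nonneg _).trans (hCK I)
  have hQ_cost := entCost_sub_le C hη hQ.1 hQ1 hP0 hP1 hu (hQP.trans hstop) huN
  have hR_cost := entCost_sub_le C hη hR.1 hR1 hPstarF.1 hPs1 hu hRPs_le huN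
  have hP_cost := entCost_le_of_isScaling hK hP hη hCK hR.1 (hR1.trans hP1.symm) hR.2
  have := mul_le_mul_of_nonneg_left hPR hδ
  rw [abs_le]
  constructor <;> linarith [hPstarMin Q hQ]

theorem approx_gibbs_kernel_entropic_cost_bound_general
    {m : ℕ} (hm : 2 ≤ m) {n : Fin m → ℕ} (hn : ∀ k, 2 ≤ n k)
    (C : Tensor n)
    (η : ℝ) (hη : 0 < η)
    (r : ∀ k : Fin m, Fin (n k) → ℝ) (hr : ∀ k, IsSimplex (r k))
    (Kt : Tensor n) (hKt : ∀ I, 0 < Kt I)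
    (εlog : ℝ) (hεlog0 : 0 < εlog) (hεlog1 : εlog ≤ 1)
    (hlog : supAbs (fun I : Idx n =>
      Real.log (Real.exp (-C I / η)) - Real.log (Kt I)) ≤ εlog)
    (Pt : Tensor n) (hscal : IsScaling Kt Pt) (hPt1 : tnorm1 Pt = 1)
    (εstop : ℝ) (hεs0 : 0 < εstop) (hεs1 : εstop ≤ 1)
    (hstop : ∑ k, vnorm1 (fun j => marginal Pt k j - r k j) ≤ εstop)
    (Pstar : Tensor n) (hPstarF : Feasible r Pstar)
    (hPstarMin : ∀ Q : Tensor n, Feasible r Q → entCost C η Pstar ≤ entCost C η Q) :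
    |entCost C η Pstar - entCost C η Pt| ≤
      η * (εlog * (2 + Real.log (2 / εlog))
          + εlog / 2 * Real.log ((∏ k, (n k : ℝ)) - 1)
          + 2 * εstop * Real.log (εstop⁻¹ * ((∏ k, (n k : ℝ)) - 1)))
        + (εlog + 2 * εstop) * supAbs C := by
  have : NeZero m := ⟨by omega⟩
  set N := ∏ k, (n k : ℝ)
  have hcard : (Fintype.card (Idx n) : ℝ) = N := by simp [N, Fintype.card_pi]
  have hN : 4 ≤ N := calc
    (4 : ℝ) = 2 ^ 2 := by norm_num
    _ ≤ ∏ _k : Fin m, (2 : ℝ) := by simpa using pow_le_pow_right₀ one_le_two hm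
    _ ≤ N := Finset.prod_le_prod (fun _ _ => zero_le_two) fun k _ => by exact_mod_cast hn k
  have hPt_sum : ∑ I, Pt I = 1 := by simpa only [tnorm1, abs_of_pos (hscal.pos hKt _)] using hPt1
  have hmain := abs_entCost_sub_le_of_isScaling hr hKt hscal hPt_sum hη.le
    (fun I => abs_add_mul_log_le hη ((abs_le_supAbs _ I).trans hlog)) hεs0
    (by rw [hcard]; nlinarith [exp_one_lt_d9]) hstop hPstarF hPstarMin
  have hlogN := mul_le_mul_of_nonneg_left (mul_log_div_le hεs0 hεs1 hN) hη.le
  have hlog2 : 0 ≤ η * (εlog * log (2 / εlog)) :=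
    mul_nonneg hη.le (mul_nonneg hεlog0.le (log_nonneg (by rw [le_div_iff₀ hεlog0]; linarith)))
  have hlogN1 : 0 ≤ η * (εlog / 2 * log (N - 1)) :=
    mul_nonneg hη.le (mul_nonneg (by positivity) (log_nonneg (by linarith)))
  have hC := mul_nonneg (add_nonneg hεlog0.le hεs0.le) (supAbs_nonneg C)
  rw [hcard] at hmain
  linarith

/-- Theorem `thm:LowRankError`: impact of approximating the Gibbs kernel
`K = exp(−C/η)` by `K̃` with `‖log K − log K̃‖_∞ ≤ ε_log` on the entropic transport cost of
the transport plan `P̃` returned by the approximate Sinkhorn iteration. -/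
theorem approx_gibbs_kernel_entropic_cost_bound
    {m : ℕ} (hm : 2 ≤ m) {n : Fin m → ℕ} (hn : ∀ k, 2 ≤ n k)
    (C : Tensor n) (hC : ∀ I, 0 ≤ C I)
    (η : ℝ) (hη : 0 < η)
    (r : ∀ k : Fin m, Fin (n k) → ℝ) (hr : ∀ k, IsSimplex (r k))
    (Kt : Tensor n) (hKt : ∀ I, 0 < Kt I)
    (εlog : ℝ) (hεlog0 : 0 < εlog) (hεlog1 : εlog ≤ 1)
    (hlog : supAbs (fun I : Idx n =>
      Real.log (Real.exp (-C I / η)) - Real.log (Kt I)) ≤ εlog)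
    (Pt : Tensor n) (hscal : IsScaling Kt Pt) (hPt1 : tnorm1 Pt = 1)
    (εstop : ℝ) (hεs0 : 0 < εstop) (hεs1 : εstop ≤ 1)
    (hstop : ∑ k, vnorm1 (fun j => marginal Pt k j - r k j) ≤ εstop)
    (Pstar : Tensor n) (hPstarF : Feasible r Pstar)
    (hPstarMin : ∀ Q : Tensor n, Feasible r Q → entCost C η Pstar ≤ entCost C η Q) :
    |entCost C η Pstar - entCost C η Pt| ≤
      η * (εlog * (2 + Real.log (2 / εlog))
          + εlog / 2 * Real.log ((∏ k, (n k : ℝ)) - 1)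
          + 2 * εstop * Real.log (εstop⁻¹ * ((∏ k, (n k : ℝ)) - 1)))
        + (εlog + 2 * εstop) * supAbs C :=
  approx_gibbs_kernel_entropic_cost_bound_general hm hn C η hη r hr Kt hKt εlog hεlog0 hεlog1 hlog
    Pt hscal hPt1 εstop hεs0 hεs1 hstop Pstar hPstarF hPstarMin

end MOT
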